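/- Let τ be a Young diagram, j ≥ 1 an integer, and set r = τ'_j. Let μ be the sequence of row lengths (τ_1 − 1, τ_2 − 1, ..., τ_r − 1, j − 1, τ_{r+1}, τ_{r+2}, ...). Then μ is weakly decreasing, so it is the sequence of row lengths of a Young diagram; |μ| = |τ| − 1 + j − τ'_j; and its column lengths satisfy μ'_i = τ'_i + 1 for 1 ≤ i < j and μ'_i = τ'_{i+1} for i ≥ j. (Thus μ is the (ν−s)-core of τ for s = |τ| − 1 + j − τ'_j, defined by the stated column lengths, and this row description realizes it as the result of removing an (n−s)-hook from τ with a long top row attached.) -/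

import Mathlib

/-- The row-length sequence (1-based index `i`) of the `(ν−s)`-core of `τ`
for `s = |τ| − 1 + j − τ'_j`: the sequence
`(τ_1 − 1, τ_2 − 1, ..., τ_r − 1, j − 1, τ_{r+1}, τ_{r+2}, ...)` where `r = τ'_j`. -/
def coreRow (τ : YoungDiagram) (j : ℕ) (i : ℕ) : ℕ :=
  if i ≤ τ.colLen (j - 1) then τ.rowLen (i - 1) - 1
  else if i = τ.colLen (j - 1) + 1 then j - 1
  else τ.rowLen (i - 2)

/-! Index rows and columns from `0`, put `r = τ.colLen (j - 1)`, `f k = coreRow τ j (k + 1)`, and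
let `g c` be `τ.colLen c + 1` for `c + 1 < j` and `τ.colLen (c + 1)` otherwise. Comparing the three
row regimes `k < r`, `k = r`, `k > r` with the two column regimes gives `c < f k ↔ k < g c`. Any
such pair of sequences is the row and column data of one Young diagram, which yields the
monotonicity of `f` and the column lengths at once; the size is then the sum of the column
lengths. -/

open Finset

theorem antitone_of_lt_iff_lt {r c : ℕ → ℕ} (h : ∀ i j, j < r i ↔ i < c j) : Antitone r :=
  fun a b hab => le_of_forall_lt fun j hj => (h a j).mpr (hab.trans_lt ((h b j).mp hj))

namespace YoungDiagram

theorem lt_rowLen_iff_lt_colLen (μ : YoungDiagram) {i j : ℕ} :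
    j < μ.rowLen i ↔ i < μ.colLen j := by
  rw [← mem_iff_lt_rowLen, mem_iff_lt_colLen]

theorem card_eq_sum_colLen (μ : YoungDiagram) {N : ℕ} (hN : μ.rowLen 0 ≤ N) :
    μ.card = ∑ j ∈ range N, μ.colLen j := by
  rw [YoungDiagram.card, card_eq_sum_card_fiberwise (f := Prod.snd) (t := range N)]
  · exact sum_congr rfl fun j _ => μ.colLen_eq_card.symm
  · rintro ⟨i, j⟩ hc
    have := μ.rowLen_anti 0 i (Nat.zero_le i)
    have := mem_iff_lt_rowLen.mp ((μ.mem_cells _).mp hc)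
    simp only [coe_range, Set.mem_Iio]
    omega

def ofRowLenColLen (r c : ℕ → ℕ) (h : ∀ i j, j < r i ↔ i < c j) : YoungDiagram where
  cells := (range (c 0) ×ˢ range (r 0)).filter fun x => x.2 < r x.1
  isLowerSet := by
    rintro ⟨a, b⟩ ⟨a', b'⟩ ⟨ha, hb⟩ hx
    simp only [coe_filter, mem_product, mem_range, Set.mem_ofPred_eq] at hx ⊢
    exact ⟨⟨by omega, by omega⟩, hb.trans_lt (hx.2.trans_le (antitone_of_lt_iff_lt h ha))⟩

section OfRowLenColLen

variable {r c : ℕ → ℕ} {h : ∀ i j, j < r i ↔ i < c j}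

theorem mem_ofRowLenColLen {i j : ℕ} : (i, j) ∈ ofRowLenColLen r c h ↔ j < r i := by
  rw [← mem_cells, ofRowLenColLen, mem_filter, mem_product, mem_range, mem_range]
  refine ⟨And.right, fun hj => ⟨⟨?_, ?_⟩, hj⟩⟩
  · exact ((h i j).mp hj).trans_le (antitone_of_lt_iff_lt (fun i j => (h j i).symm) j.zero_le)
  · exact hj.trans_le (antitone_of_lt_iff_lt h i.zero_le)

theorem rowLen_ofRowLenColLen (i : ℕ) : (ofRowLenColLen r c h).rowLen i = r i :=
  eq_of_forall_lt_iff fun j => by rw [← mem_iff_lt_rowLen, mem_ofRowLenColLen]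

theorem colLen_ofRowLenColLen (j : ℕ) : (ofRowLenColLen r c h).colLen j = c j :=
  eq_of_forall_lt_iff fun i => by rw [← mem_iff_lt_colLen, mem_ofRowLenColLen, h]

end OfRowLenColLen

end YoungDiagram

open YoungDiagram

/-- Column `c` counted from `0`, whereas `coreRow` counts rows from `1`. -/
def coreColLen (τ : YoungDiagram) (j c : ℕ) : ℕ :=
  if c + 1 < j then τ.colLen c + 1 else τ.colLen (c + 1)

theorem lt_coreRow_succ_iff (τ : YoungDiagram) {j : ℕ} (hj : 1 ≤ j) (k c : ℕ) :
    c < coreRow τ j (k + 1) ↔ k < coreColLen τ j c := by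
  unfold coreRow coreColLen
  rw [Nat.add_sub_cancel, show k + 1 - 2 = k - 1 by omega]
  have := τ.lt_rowLen_iff_lt_colLen (i := k) (j := c + 1)
  have := τ.lt_rowLen_iff_lt_colLen (i := k - 1) (j := c)
  have := τ.lt_rowLen_iff_lt_colLen (i := k) (j := j - 1)
  have := τ.colLen_anti c (j - 1)
  have := τ.colLen_anti (j - 1) c
  have := τ.colLen_anti (j - 1) (c + 1)
  split_ifs <;> omega

def coreDiagram (τ : YoungDiagram) {j : ℕ} (hj : 1 ≤ j) : YoungDiagram :=
  ofRowLenColLen (fun k => coreRow τ j (k + 1)) (coreColLen τ j) (lt_coreRow_succ_iff τ hj)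

theorem card_coreDiagram (τ : YoungDiagram) {j : ℕ} (hj : 1 ≤ j) :
    (coreDiagram τ hj).card + τ.colLen (j - 1) = τ.card + (j - 1) := by
  obtain ⟨a, rfl⟩ := Nat.exists_eq_add_of_le' hj
  set n := τ.rowLen 0
  have hμ : (coreDiagram τ hj).card = ∑ c ∈ range (a + n), coreColLen τ (a + 1) c := by
    rw [card_eq_sum_colLen _ (N := a + n)]
    · exact sum_congr rfl fun c _ => colLen_ofRowLenColLen c
    · rw [← not_lt, lt_rowLen_iff_lt_colLen, coreDiagram, colLen_ofRowLenColLen, coreColLen,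
        if_neg (by omega), ← lt_rowLen_iff_lt_colLen]
      omega
  have hτ : τ.card = ∑ c ∈ range (a + (n + 1)), τ.colLen c := card_eq_sum_colLen τ (by omega)
  rw [hμ, hτ, sum_range_add, sum_range_add, sum_range_succ']
  have hleft : ∀ c ∈ range a, coreColLen τ (a + 1) c = τ.colLen c + 1 := fun c hc => by
    rw [coreColLen, if_pos (Nat.succ_lt_succ (mem_range.mp hc))]
  have hright : ∀ x ∈ range n, coreColLen τ (a + 1) (a + x) = τ.colLen (a + (x + 1)) :=
    fun x _ => by rw [coreColLen, if_neg (by omega), add_assoc]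
  rw [sum_congr rfl hleft, sum_congr rfl hright, sum_add_distrib, sum_const, card_range]
  simp only [smul_eq_mul, mul_one, add_zero, Nat.add_sub_cancel]
  ring

/-- Let τ be a Young diagram, j ≥ 1, r = τ'_j, and let μ have row lengths
(τ_1 − 1, ..., τ_r − 1, j − 1, τ_{r+1}, ...). Then this sequence is weakly
decreasing, so it is the row-length sequence of a Young diagram μ;
|μ| = |τ| − 1 + j − τ'_j; and μ'_i = τ'_i + 1 for 1 ≤ i < j,
μ'_i = τ'_{i+1} for i ≥ j (1-based column indices). -/
theorem stmt7 (τ : YoungDiagram) (j : ℕ) (hj : 1 ≤ j) :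
    (∀ i, 1 ≤ i → coreRow τ j (i + 1) ≤ coreRow τ j i) ∧
    ∃ μ : YoungDiagram,
      (∀ i, 1 ≤ i → μ.rowLen (i - 1) = coreRow τ j i) ∧
      (μ.card : ℤ) = (τ.card : ℤ) - 1 + (j : ℤ) - (τ.colLen (j - 1) : ℤ) ∧
      (∀ i, 1 ≤ i → i < j → μ.colLen (i - 1) = τ.colLen (i - 1) + 1) ∧
      (∀ i, j ≤ i → μ.colLen (i - 1) = τ.colLen i) := by
  have hcol (c : ℕ) : (coreDiagram τ hj).colLen c = coreColLen τ j c := colLen_ofRowLenColLen c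
  refine ⟨fun i hi => ?_, coreDiagram τ hj, fun i hi => ?_, ?_, fun i hi hij => ?_, fun i hi => ?_⟩
  · obtain ⟨k, rfl⟩ := Nat.exists_eq_add_of_le' hi
    exact antitone_of_lt_iff_lt (lt_coreRow_succ_iff τ hj) k.le_succ
  · obtain ⟨k, rfl⟩ := Nat.exists_eq_add_of_le' hi
    exact rowLen_ofRowLenColLen k
  · have := card_coreDiagram τ hj
    omega
  · rw [hcol, coreColLen, if_pos (by omega)]
  · rw [hcol, coreColLen, if_neg (by omega), Nat.sub_add_cancel (hj.trans hi)]
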